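/- arXiv:2504.15488 — 5 statements merged into one kernel-verified Lean document; each statement's English description precedes it below -/
import Mathlib

section
/- Let n ≥ 2 and let c_1, …, c_n be nonnegative real numbers such that c_n = 0 and c_i > 0 for all 1 ≤ i ≤ n−1. Then the integral over the unit sphere S^{n-1} ⊂ ℝ^n of the function ξ ↦ (∑_{i=1}^n c_i ξ_i²)^{-n/2} with respect to the surface measure σ is infinite, i.e. ∫_{S^{n-1}} (∑_{i=1}^{n-1} c_i ξ_i²)^{-n/2} dσ(ξ) = +∞. -/
/-!
Near the poles `±e_n` the form `∑ cᵢ ξᵢ²` vanishes to second order: on the cap where the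
first `n - 1` coordinates are at most `s` in absolute value it is at most `(∑ cᵢ) s²`, while
the cap projects 1-Lipschitz onto the cube `[-s, s]^{n-1}`, so its `(n-1)`-dimensional
Hausdorff measure is at least `(2s)^{n-1}`. Hence the integral is at least
`const · s^{-n} · s^{n-1} = const / s` for all small `s > 0`.
-/

open MeasureTheory Metric Filter Topology

lemma ENNReal.rpow_le_rpow_of_nonpos {x y : ENNReal} {z : ℝ} (hxy : x ≤ y) (hz : z ≤ 0) :
    y ^ z ≤ x ^ z := by
  obtain ⟨w, hw, rfl⟩ : ∃ w, 0 ≤ w ∧ z = -w := ⟨-z, by linarith, by ring⟩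
  rw [ENNReal.rpow_neg, ENNReal.rpow_neg]
  exact ENNReal.inv_le_inv.2 (ENNReal.rpow_le_rpow hxy hw)

lemma eq_top_of_eventually_inv_ofReal_mul_le {I K : ENNReal} (hK : K ≠ 0)
    (h : ∀ᶠ s in 𝓝[>] (0 : ℝ), (ENNReal.ofReal s)⁻¹ * K ≤ I) : I = ⊤ := by
  have hofReal : Tendsto ENNReal.ofReal (𝓝[>] (0 : ℝ)) (𝓝 0⁻¹⁻¹) := by
    simpa using ENNReal.continuous_ofReal.tendsto' 0 0 ENNReal.ofReal_zero |>.mono_left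
      nhdsWithin_le_nhds
  have hinv := ENNReal.Tendsto.mul_const (tendsto_inv_iff.2 hofReal) (b := K) (Or.inl (by simp))
  rw [inv_inv, ENNReal.inv_zero, ENNReal.top_mul hK] at hinv
  exact top_unique (le_of_tendsto hinv h)

lemma PiLp.lipschitzWith_one_comp {ι κ E : Type*} [Fintype ι] [Fintype κ] [PseudoEMetricSpace E]
    (p : ENNReal) [Fact (1 ≤ p)] (g : κ → ι) :
    LipschitzWith 1 fun x : PiLp p (fun _ : ι => E) => fun k => x (g k) :=
  LipschitzWith.of_edist_le fun x y => by
    simpa [edist_pi_le_iff] using fun k => PiLp.edist_apply_le x y (g k)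

def sphereCap (m : ℕ) (s : ℝ) : Set (EuclideanSpace ℝ (Fin (m + 1))) :=
  {ξ ∈ sphere 0 1 | ∀ j : Fin m, |ξ j.castSucc| ≤ s}

lemma isClosed_sphereCap (m : ℕ) (s : ℝ) : IsClosed (sphereCap m s) :=
  isClosed_sphere.inter <|
    isClosed_le (f := fun (ξ : EuclideanSpace ℝ (Fin (m + 1))) (j : Fin m) => |ξ j.castSucc|)
      (g := fun _ _ => s) (by fun_prop) continuous_const

lemma exists_mem_sphere_castSucc_eq {m : ℕ} (y : Fin m → ℝ) (hy : ∑ j, y j ^ 2 ≤ 1) :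
    ∃ ξ ∈ sphere (0 : EuclideanSpace ℝ (Fin (m + 1))) 1,
      ∀ j : Fin m, ξ j.castSucc = y j := by
  have ht : √(1 - ∑ j, y j ^ 2) ^ 2 = 1 - ∑ j, y j ^ 2 := Real.sq_sqrt (by linarith)
  refine ⟨WithLp.toLp 2 (Fin.snoc y √(1 - ∑ j, y j ^ 2)), ?_, fun j => by simp⟩
  simp [EuclideanSpace.norm_eq, Fin.sum_univ_castSucc, ht]

lemma closedBall_subset_image_sphereCap {m : ℕ} {s : ℝ} (hs : m * s ^ 2 ≤ 1) :
    closedBall 0 s ⊆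
      (fun ξ : EuclideanSpace ℝ (Fin (m + 1)) => fun j : Fin m => ξ j.castSucc) ''
        sphereCap m s := by
  intro y hy
  rw [mem_closedBall, dist_pi_le_iff (dist_nonneg.trans hy)] at hy
  have hys : ∀ j, |y j| ≤ s := by simpa [Real.dist_eq] using hy
  have hsum : ∑ j, y j ^ 2 ≤ 1 :=
    calc ∑ j, y j ^ 2 ≤ ∑ _j : Fin m, s ^ 2 := Finset.sum_le_sum fun j _ =>
          sq_le_sq' (abs_le.1 (hys j)).1 (abs_le.1 (hys j)).2
      _ = m * s ^ 2 := by simp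
      _ ≤ 1 := hs
  obtain ⟨ξ, hξ, hξy⟩ := exists_mem_sphere_castSucc_eq y hsum
  exact ⟨ξ, ⟨hξ, fun j => hξy j ▸ hys j⟩, funext hξy⟩

lemma ofReal_two_mul_pow_le_hausdorffMeasure_sphereCap {m : ℕ} {s : ℝ} (hs : 0 ≤ s)
    (hms : m * s ^ 2 ≤ 1) : ENNReal.ofReal (2 * s) ^ m ≤ μH[m] (sphereCap m s) := by
  have hvol : (μH[m] : Measure (Fin m → ℝ)) = volume := by
    simpa using hausdorffMeasure_pi_real (ι := Fin m)
  calc ENNReal.ofReal (2 * s) ^ m = μH[m] (closedBall (0 : Fin m → ℝ) s) := by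
        rw [hvol, Real.volume_pi_closedBall 0 hs, ENNReal.ofReal_pow (by positivity),
          Fintype.card_fin]
    _ ≤ μH[m] ((fun ξ : EuclideanSpace ℝ (Fin (m + 1)) => fun j : Fin m => ξ j.castSucc) ''
          sphereCap m s) :=
        measure_mono (closedBall_subset_image_sphereCap hms)
    _ ≤ μH[m] (sphereCap m s) := by
        simpa using (PiLp.lipschitzWith_one_comp 2 Fin.castSucc).hausdorffMeasure_image_le
          (Nat.cast_nonneg m) (sphereCap m s)

lemma sum_mul_sq_le_of_abs_castSucc_le {m : ℕ} {c : Fin (m + 1) → ℝ} (hc : ∀ i, 0 ≤ c i)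
    (hlast : c (Fin.last m) = 0) {s : ℝ} {ξ : EuclideanSpace ℝ (Fin (m + 1))}
    (hξ : ∀ j : Fin m, |ξ j.castSucc| ≤ s) :
    ∑ i, c i * ξ i ^ 2 ≤ (∑ i, c i) * s ^ 2 := by
  rw [Fin.sum_univ_castSucc, Fin.sum_univ_castSucc, hlast, zero_mul, add_zero, add_zero,
    Finset.sum_mul]
  exact Finset.sum_le_sum fun j _ =>
    mul_le_mul_of_nonneg_left (sq_le_sq' (abs_le.1 (hξ j)).1 (abs_le.1 (hξ j)).2) (hc _)

lemma ofReal_mul_sq_rpow_mul_ofReal_two_mul_pow (m : ℕ) (C : ℝ) {s : ℝ} (hs : 0 < s) :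
    ENNReal.ofReal (C * s ^ 2) ^ (-((m + 1 : ℕ) : ℝ) / 2) * ENNReal.ofReal (2 * s) ^ m =
      (ENNReal.ofReal s)⁻¹ * (ENNReal.ofReal C ^ (-((m + 1 : ℕ) : ℝ) / 2) * 2 ^ m) := by
  set x := ENNReal.ofReal s
  have hx : x ≠ 0 := (ENNReal.ofReal_pos.2 hs).ne'
  have hpow : (x ^ 2) ^ (-((m + 1 : ℕ) : ℝ) / 2) * x ^ m = x⁻¹ := by
    rw [← ENNReal.rpow_natCast_mul, ← ENNReal.rpow_natCast x m,
      ← ENNReal.rpow_add _ _ hx ENNReal.ofReal_ne_top,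
      show ((2 : ℕ) : ℝ) * (-((m + 1 : ℕ) : ℝ) / 2) + m = -1 by push_cast; ring,
      ENNReal.rpow_neg_one]
  rw [ENNReal.ofReal_mul' (sq_nonneg s), ENNReal.ofReal_pow hs.le,
    ENNReal.mul_rpow_of_ne_top ENNReal.ofReal_ne_top (ENNReal.pow_ne_top ENNReal.ofReal_ne_top),
    ENNReal.ofReal_mul zero_le_two, mul_pow, ENNReal.ofReal_ofNat, ← hpow]
  ring

theorem lintegral_sphere_ofReal_sum_mul_sq_rpow_eq_top {m : ℕ} (c : Fin (m + 1) → ℝ)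
    (hc : ∀ i, 0 ≤ c i) (hlast : c (Fin.last m) = 0) :
    ∫⁻ ξ in sphere (0 : EuclideanSpace ℝ (Fin (m + 1))) 1,
      ENNReal.ofReal (∑ i, c i * ξ i ^ 2) ^ (-((m + 1 : ℕ) : ℝ) / 2) ∂μH[m] = ⊤ := by
  set p : ℝ := -((m + 1 : ℕ) : ℝ) / 2
  set C : ℝ := ∑ i, c i
  have hp : p ≤ 0 := div_nonpos_of_nonpos_of_nonneg (neg_nonpos.2 (Nat.cast_nonneg _)) zero_le_two
  have hK : ENNReal.ofReal C ^ p * 2 ^ m ≠ 0 :=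
    mul_ne_zero (by simp [ENNReal.rpow_eq_zero_iff, hp]) (by simp)
  have hsmall : ∀ᶠ s in 𝓝[>] (0 : ℝ), (m : ℝ) * s ^ 2 ≤ 1 :=
    ((continuous_const.mul (continuous_pow 2)).tendsto' 0 0 (by simp)).eventually
      (eventually_le_nhds one_pos) |>.filter_mono nhdsWithin_le_nhds
  refine eq_top_of_eventually_inv_ofReal_mul_le hK ?_
  filter_upwards [self_mem_nhdsWithin, hsmall] with s (hs : 0 < s) hms
  calc (ENNReal.ofReal s)⁻¹ * (ENNReal.ofReal C ^ p * 2 ^ m)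
      = ENNReal.ofReal (C * s ^ 2) ^ p * ENNReal.ofReal (2 * s) ^ m :=
        (ofReal_mul_sq_rpow_mul_ofReal_two_mul_pow m C hs).symm
    _ ≤ ENNReal.ofReal (C * s ^ 2) ^ p * μH[m] (sphereCap m s) := by
        gcongr; exact ofReal_two_mul_pow_le_hausdorffMeasure_sphereCap hs.le hms
    _ = ∫⁻ _ in sphereCap m s, ENNReal.ofReal (C * s ^ 2) ^ p ∂μH[m] :=
        (setLIntegral_const _ _).symm
    _ ≤ ∫⁻ ξ in sphereCap m s, ENNReal.ofReal (∑ i, c i * ξ i ^ 2) ^ p ∂μH[m] :=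
        setLIntegral_mono' (isClosed_sphereCap m s).measurableSet fun ξ hξ =>
          ENNReal.rpow_le_rpow_of_nonpos
            (ENNReal.ofReal_le_ofReal (sum_mul_sq_le_of_abs_castSucc_le hc hlast hξ.2)) hp
    _ ≤ _ := lintegral_mono_set (Set.sep_subset _ _)

/-- If `c_n = 0` and `cᵢ > 0` for `i < n`, then the (lower Lebesgue) integral
over the unit sphere `S^{n-1} ⊆ ℝⁿ` of `ξ ↦ (∑ cᵢ ξᵢ²)^{-n/2}` is infinite. -/
theorem sphere_integral_degenerate_quadratic_form_eq_top (n : ℕ) (hn : 2 ≤ n)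
    (c : Fin n → ℝ) (hc0 : ∀ i, 0 ≤ c i)
    (hlast : c ⟨n - 1, by omega⟩ = 0) :
    ∫⁻ ξ in Metric.sphere (0 : EuclideanSpace ℝ (Fin n)) 1,
        (ENNReal.ofReal (∑ i, c i * ξ i ^ 2)) ^ (-(n : ℝ) / 2) ∂μH[(n : ℝ) - 1] = ⊤ := by
  obtain ⟨m, rfl⟩ : ∃ m, n = m + 1 := ⟨n - 1, by omega⟩
  rw [show ((m + 1 : ℕ) : ℝ) - 1 = m by push_cast; ring]
  exact lintegral_sphere_ofReal_sum_mul_sq_rpow_eq_top c hc0 hlast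
end

section
/- Let m be a nonnegative integer and let a, b > 0 be real numbers. Then ∫_0^π sin^m(x) · (a cos²x + b sin²x)^{-(m+2)/2} dx = (√π / (a^{1/2} b^{(m+1)/2})) · Γ((m+1)/2) / Γ(m/2 + 1). -/
/-!
Let `φ(x)` be the polar angle of the point `(√a cos x, √b sin x)` and
`Q = a cos² x + b sin² x`. Then `sin φ = √b sin x / √Q` and `dφ = √(ab) / Q dx`, so the
integrand equals `(√a √b ^ (m + 1))⁻¹ sinᵐ φ dφ`. As `φ` runs from `0` to `π` with `x`, the
integral reduces to Wallis' integral `∫₀^π sinᵐ = √π Γ((m + 1) / 2) / Γ(m / 2 + 1)`.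
-/

open Real

theorem integral_sin_pow_eq_sqrt_pi_mul_Gamma_div (m : ℕ) :
    ∫ x in (0 : ℝ)..π, sin x ^ m =
      √π * (Gamma (((m : ℝ) + 1) / 2) / Gamma ((m : ℝ) / 2 + 1)) := by
  induction m using Nat.twoStepInduction with
  | zero =>
    norm_num [Gamma_one_half_eq, mul_self_sqrt pi_pos.le]
  | one =>
    have h32 : Gamma (3 / 2) = √π / 2 := by
      rw [show (3 : ℝ) / 2 = 1 / 2 + 1 by norm_num, Gamma_add_one (by norm_num),
        Gamma_one_half_eq]
      ring
    norm_num [h32]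
    field_simp
  | more n ih _ =>
    have hnum : Gamma (((n : ℝ) + 2 + 1) / 2) = ((n + 1) / 2) * Gamma ((n + 1) / 2) := by
      rw [show ((n : ℝ) + 2 + 1) / 2 = (n + 1) / 2 + 1 by ring, Gamma_add_one (by positivity)]
    have hden : Gamma (((n : ℝ) + 2) / 2 + 1) = (n / 2 + 1) * Gamma (n / 2 + 1) := by
      rw [show ((n : ℝ) + 2) / 2 + 1 = n / 2 + 1 + 1 by ring, Gamma_add_one (by positivity)]
    have hpos : Gamma ((n : ℝ) / 2 + 1) ≠ 0 := (Gamma_pos_of_pos (by positivity)).ne'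
    rw [integral_sin_pow, ih]
    push_cast
    rw [hnum, hden]
    simp only [sin_zero, sin_pi, zero_pow (Nat.succ_ne_zero _), zero_mul, sub_self, zero_div,
      zero_add]
    field_simp

theorem mul_cos_sq_add_mul_sin_sq_pos {p q : ℝ} (hp : 0 < p) (hq : 0 < q) (x : ℝ) :
    0 < p * cos x ^ 2 + q * sin x ^ 2 := by
  rcases le_total p q with h | h
  · nlinarith [mul_nonneg (sub_nonneg.2 h) (sq_nonneg (sin x)), sin_sq_add_cos_sq x]
  · nlinarith [mul_nonneg (sub_nonneg.2 h) (sq_nonneg (cos x)), sin_sq_add_cos_sq x]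

/-- The polar angle of the point `(p cos x, q sin x)`, made continuous in `x`:
the argument of `arctan` is the tangent of its difference with `x`. -/
noncomputable def ellipseAngle (p q x : ℝ) : ℝ :=
  x + arctan ((q - p) * (sin x * cos x) / (p * cos x ^ 2 + q * sin x ^ 2))

section ellipseAngle

variable {p q : ℝ}

@[simp] theorem ellipseAngle_zero : ellipseAngle p q 0 = 0 := by simp [ellipseAngle]

@[simp] theorem ellipseAngle_pi : ellipseAngle p q π = π := by simp [ellipseAngle]

theorem one_add_sq_ellipseAngle_tan (hp : 0 < p) (hq : 0 < q) (x : ℝ) :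
    1 + ((q - p) * (sin x * cos x) / (p * cos x ^ 2 + q * sin x ^ 2)) ^ 2 =
      (p ^ 2 * cos x ^ 2 + q ^ 2 * sin x ^ 2) / (p * cos x ^ 2 + q * sin x ^ 2) ^ 2 := by
  have := (mul_cos_sq_add_mul_sin_sq_pos hp hq x).ne'
  field_simp
  linear_combination (p ^ 2 * cos x ^ 2 + q ^ 2 * sin x ^ 2) * sin_sq_add_cos_sq x

theorem sin_ellipseAngle (hp : 0 < p) (hq : 0 < q) (x : ℝ) :
    sin (ellipseAngle p q x) = q * sin x / √(p ^ 2 * cos x ^ 2 + q ^ 2 * sin x ^ 2) := by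
  have hD := mul_cos_sq_add_mul_sin_sq_pos hp hq x
  have hE := sqrt_pos.2 (mul_cos_sq_add_mul_sin_sq_pos (pow_pos hp 2) (pow_pos hq 2) x)
  rw [ellipseAngle, sin_add, sin_arctan, cos_arctan, one_add_sq_ellipseAngle_tan hp hq,
    sqrt_div' _ (sq_nonneg _), sqrt_sq hD.le]
  generalize √(p ^ 2 * cos x ^ 2 + q ^ 2 * sin x ^ 2) = r at hE ⊢
  rw [one_div_div, div_div_eq_mul_div, div_mul_cancel₀ _ hD.ne']
  field_simp
  linear_combination q * sin x * sin_sq_add_cos_sq x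

theorem hasDerivAt_ellipseAngle (hp : 0 < p) (hq : 0 < q) (x : ℝ) :
    HasDerivAt (ellipseAngle p q) (p * q / (p ^ 2 * cos x ^ 2 + q ^ 2 * sin x ^ 2)) x := by
  have hD := mul_cos_sq_add_mul_sin_sq_pos hp hq x
  have hE := mul_cos_sq_add_mul_sin_sq_pos (pow_pos hp 2) (pow_pos hq 2) x
  have hN : HasDerivAt (fun y => (q - p) * (sin y * cos y))
      ((q - p) * (cos x ^ 2 - sin x ^ 2)) x :=
    (((hasDerivAt_sin x).mul (hasDerivAt_cos x)).const_mul (q - p)).congr_deriv (by ring)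
  have hD' : HasDerivAt (fun y => p * cos y ^ 2 + q * sin y ^ 2)
      (2 * (q - p) * (sin x * cos x)) x :=
    ((((hasDerivAt_cos x).pow 2).const_mul p).add
      (((hasDerivAt_sin x).pow 2).const_mul q)).congr_deriv (by push_cast; ring)
  refine ((hasDerivAt_id x).add (hN.div hD' hD.ne').arctan).congr_deriv ?_
  rw [Pi.div_apply, one_add_sq_ellipseAngle_tan hp hq]
  field_simp
  linear_combination (p * q * (sin x ^ 2 + cos x ^ 2 + 1)
    - p ^ 2 * cos x ^ 2 - q ^ 2 * sin x ^ 2) * sin_sq_add_cos_sq x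

theorem integral_sin_pow_mul_rpow_ellipse (m : ℕ) (hp : 0 < p) (hq : 0 < q) :
    ∫ x in (0 : ℝ)..π,
        sin x ^ m * (p ^ 2 * cos x ^ 2 + q ^ 2 * sin x ^ 2) ^ (-((m : ℝ) + 2) / 2) =
      (∫ x in (0 : ℝ)..π, sin x ^ m) / (p * q ^ (m + 1)) := by
  have hE := mul_cos_sq_add_mul_sin_sq_pos (pow_pos hp 2) (pow_pos hq 2)
  have hsubst :=
    intervalIntegral.integral_comp_mul_deriv (a := 0) (b := π) (g := (· ^ m) ∘ sin)
      (fun x _ => hasDerivAt_ellipseAngle hp hq x)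
      (continuous_const.div (by fun_prop) fun x => (hE x).ne').continuousOn
      (continuous_sin.pow m)
  simp only [ellipseAngle_zero, ellipseAngle_pi, Function.comp_apply] at hsubst
  rw [← hsubst, eq_div_iff (by positivity), ← intervalIntegral.integral_mul_const]
  congr 1 with x
  have hsqrt := sqrt_pos.2 (hE x)
  rw [sin_ellipseAngle hp hq, neg_div, rpow_neg (hE x).le, rpow_div_two_eq_sqrt _ (hE x).le,
    show (m : ℝ) + 2 = (m + 2 : ℕ) by push_cast; ring, rpow_natCast, pow_add,
    sq_sqrt (hE x).le, div_pow]
  generalize √(p ^ 2 * cos x ^ 2 + q ^ 2 * sin x ^ 2) = r at hsqrt ⊢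
  field_simp
  ring

end ellipseAngle

/-- For a nonnegative integer `m` and reals `a, b > 0`,
`∫₀^π sinᵐ x · (a cos²x + b sin²x)^{-(m+2)/2} dx
  = (√π / (a^{1/2} b^{(m+1)/2})) · Γ((m+1)/2) / Γ(m/2 + 1)`. -/
theorem integral_sin_pow_div_quadratic (m : ℕ) (a b : ℝ) (ha : 0 < a) (hb : 0 < b) :
    ∫ x in (0 : ℝ)..π,
        Real.sin x ^ m * (a * Real.cos x ^ 2 + b * Real.sin x ^ 2) ^ (-((m : ℝ) + 2) / 2) =
      Real.sqrt π / (a ^ ((1 : ℝ) / 2) * b ^ (((m : ℝ) + 1) / 2)) *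
        (Real.Gamma (((m : ℝ) + 1) / 2) / Real.Gamma ((m : ℝ) / 2 + 1)) := by
  have h := integral_sin_pow_mul_rpow_ellipse m (sqrt_pos.2 ha) (sqrt_pos.2 hb)
  rw [sq_sqrt ha.le, sq_sqrt hb.le] at h
  have hb_rpow : b ^ (((m : ℝ) + 1) / 2) = √b ^ (m + 1) := by
    rw [rpow_div_two_eq_sqrt _ hb.le]
    norm_cast
  rw [h, integral_sin_pow_eq_sqrt_pi_mul_Gamma_div, ← sqrt_eq_rpow, hb_rpow]
  ring
end

section
/- Let R > 0, let K ⊆ ℝ^n be an R-ball convex body, and let δ > 0. Then for every point x in the boundary ∂K_δ^R of the R-ball floating body K_δ^R there exists a point y ∈ ℝ^n such that ‖x − y‖ = R (i.e. x lies on the sphere of radius R centered at y) and vol_n(K \ closedBall(y,R)) = δ; that is, through every boundary point of K_δ^R there passes at least one closed ball of radius R that cuts off from K a set of volume exactly δ. -/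
open MeasureTheory

/-- The `R`-ball floating body `K_δ^R` of `K ⊆ ℝⁿ`: the intersection of all closed balls of
radius `R` that cut off from `K` a set of volume at most `δ`. -/
def ballFloatingBody (n : ℕ) (R δ : ℝ) (K : Set (EuclideanSpace ℝ (Fin n))) :
    Set (EuclideanSpace ℝ (Fin n)) :=
  ⋂ y ∈ {y : EuclideanSpace ℝ (Fin n) |
      volume (K \ Metric.closedBall y R) ≤ ENNReal.ofReal δ}, Metric.closedBall y R

/-- `K` is an `R`-ball convex body: compact, with nonempty interior, and equal to the
intersection of all closed balls of radius `R` containing it. -/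
def IsBallConvexBody (n : ℕ) (R : ℝ) (K : Set (EuclideanSpace ℝ (Fin n))) : Prop :=
  IsCompact K ∧ (interior K).Nonempty ∧
    K = ⋂ y ∈ {y : EuclideanSpace ℝ (Fin n) | K ⊆ Metric.closedBall y R}, Metric.closedBall y R

/-!
A boundary point `x` of `K_δ^R = ⋂_{y ∈ A} B(y, R)` must be at distance exactly `R` from some
admissible centre `y ∈ A`: the set `A` of admissible centres is closed (the volume cut off is
lower semicontinuous in the centre) and lies in `B(x, R)`, so it is compact and the farthest
centre is attained; if it were closer than `R`, a ball around `x` would stay in `K_δ^R`.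
If such a ball `B(y, R)` cut off strictly less than `δ`, then, spheres being null, so would a
slightly smaller concentric ball `B(y, r)`; the ball of radius `R` containing `B(y, r)` with
centre pushed away from `x` is then admissible and misses `x`, which is impossible.
-/

open Metric Set Filter
open scoped ENNReal

section BallLimits

variable {X : Type*} [PseudoMetricSpace X]

theorem Metric.iInter_closedBall_add_one_div (x : X) (r : ℝ) :
    ⋂ k : ℕ, closedBall x (r + 1 / (k + 1)) = closedBall x r := by
  ext z
  simp only [mem_iInter, mem_closedBall]
  refine ⟨fun h => le_of_forall_pos_lt_add fun ε hε => ?_, fun h k => ?_⟩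
  · obtain ⟨k, hk⟩ := exists_nat_one_div_lt hε
    linarith [h k]
  · have : (0 : ℝ) < 1 / (k + 1) := Nat.one_div_pos_of_nat
    linarith

theorem Metric.iUnion_closedBall_sub_one_div (x : X) (r : ℝ) :
    ⋃ k : ℕ, closedBall x (r - 1 / (k + 1)) = ball x r := by
  ext z
  simp only [mem_iUnion, mem_closedBall, mem_ball]
  refine ⟨fun ⟨k, hk⟩ => ?_, fun h => ?_⟩
  · have : (0 : ℝ) < 1 / (k + 1) := Nat.one_div_pos_of_nat
    linarith
  · obtain ⟨k, hk⟩ := exists_nat_one_div_lt (sub_pos.2 h)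
    exact ⟨k, by linarith⟩

end BallLimits

section MeasureOutsideBall

variable {X : Type*} [PseudoMetricSpace X] [MeasurableSpace X]

theorem lowerSemicontinuous_measure_diff_closedBall (μ : Measure X) (K : Set X) (R : ℝ) :
    LowerSemicontinuous fun y => μ (K \ closedBall y R) := by
  intro y t ht
  have hmono : Monotone fun k : ℕ => K \ closedBall y (R + 1 / (k + 1)) := by
    intro k l hkl
    dsimp only
    gcongr
  have hlim := tendsto_measure_iUnion_atTop (μ := μ) hmono
  rw [← sdiff_iInter, iInter_closedBall_add_one_div] at hlim
  obtain ⟨k, hk⟩ := (hlim.eventually (lt_mem_nhds ht)).exists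
  filter_upwards [ball_mem_nhds y (Nat.one_div_pos_of_nat (n := k))] with y' hy'
  refine hk.trans_le (measure_mono (sdiff_subset_sdiff_right (closedBall_subset_closedBall' ?_)))
  rw [mem_ball] at hy'
  linarith

theorem exists_lt_measure_diff_closedBall_lt [OpensMeasurableSpace X] {μ : Measure X} {K : Set X}
    (hK : NullMeasurableSet K μ) (hKfin : μ K ≠ ∞) {y : X} {R : ℝ} {c : ℝ≥0∞}
    (h : μ (K \ ball y R) < c) : ∃ r < R, μ (K \ closedBall y r) < c := by
  have hanti : Antitone fun k : ℕ => K \ closedBall y (R - 1 / (k + 1)) := by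
    intro k l hkl
    dsimp only
    gcongr
  have hlim := tendsto_measure_iInter_atTop (μ := μ)
    (fun _ => hK.diff measurableSet_closedBall.nullMeasurableSet) hanti
    ⟨0, ne_top_of_le_ne_top hKfin (measure_mono sdiff_subset)⟩
  rw [← sdiff_iUnion, iUnion_closedBall_sub_one_div] at hlim
  obtain ⟨k, hk⟩ := (hlim.eventually (gt_mem_nhds h)).exists
  exact ⟨_, sub_lt_self R Nat.one_div_pos_of_nat, hk⟩

end MeasureOutsideBall

theorem measure_diff_ball_eq_measure_diff_closedBall {E : Type*} [NormedAddCommGroup E]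
    [NormedSpace ℝ E] [MeasurableSpace E] [BorelSpace E] [FiniteDimensional ℝ E]
    (μ : Measure E) [μ.IsAddHaarMeasure] (K : Set E) (y : E) {R : ℝ} (hR : R ≠ 0) :
    μ (K \ ball y R) = μ (K \ closedBall y R) := by
  refine measure_congr (EventuallyEq.rfl.diff (ae_eq_set.2 ⟨?_, ?_⟩))
  · rw [sdiff_eq_empty.2 ball_subset_closedBall, measure_empty]
  · rw [closedBall_sdiff_ball, Measure.addHaar_sphere_of_ne_zero μ y hR]

theorem exists_closedBall_superset_dist_gt {E : Type*} [NormedAddCommGroup E] [NormedSpace ℝ E]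
    {x y : E} {r R : ℝ} (hR : 0 < R) (hxy : dist x y = R) (hr : r < R) :
    ∃ y', closedBall y r ⊆ closedBall y' R ∧ R < dist x y' := by
  -- move the centre away from `x` by `R - r`
  set t := (R - r) / R
  have ht : t * R = R - r := div_mul_cancel₀ _ hR.ne'
  have hnorm : ‖y - x‖ = R := by rw [← dist_eq_norm, dist_comm, hxy]
  refine ⟨y + t • (y - x), closedBall_subset_closedBall' ?_, ?_⟩
  · rw [dist_eq_norm, sub_add_cancel_left, norm_neg, norm_smul, hnorm,
      Real.norm_of_nonneg (div_nonneg (sub_nonneg.2 hr.le) hR.le), ht]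
    linarith
  · have : x - (y + t • (y - x)) = -((1 + t) • (y - x)) := by module
    rw [dist_eq_norm, this, norm_neg, norm_smul, hnorm,
      Real.norm_of_nonneg (by positivity), add_mul, ht]
    linarith

theorem dist_le_of_mem_frontier_biInter_closedBall {X : Type*} [PseudoMetricSpace X]
    {A : Set X} {R : ℝ} {x y : X} (hx : x ∈ frontier (⋂ y ∈ A, closedBall y R))
    (hy : y ∈ A) : dist x y ≤ R :=
  mem_iInter₂.1 ((isClosed_biInter fun _ _ => isClosed_closedBall).frontier_subset hx) y hy

theorem exists_mem_dist_eq_of_mem_frontier_biInter_closedBall {X : Type*}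
    [PseudoMetricSpace X] [ProperSpace X] {A : Set X} (hA : IsClosed A) {R : ℝ} {x : X}
    (hx : x ∈ frontier (⋂ y ∈ A, closedBall y R)) : ∃ y ∈ A, dist x y = R := by
  have hxA : ∀ y ∈ A, dist x y ≤ R := fun _ => dist_le_of_mem_frontier_biInter_closedBall hx
  have hAc : IsCompact A := (isCompact_closedBall x R).of_isClosed_subset hA fun y hy => by
    rw [mem_closedBall, dist_comm]
    exact hxA y hy
  have hAne : A.Nonempty := by
    by_contra! h
    simp [h] at hx
  obtain ⟨y, hyA, hmax⟩ :=
    hAc.exists_isMaxOn hAne (continuous_const.dist continuous_id).continuousOn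
  refine ⟨y, hyA, (hxA y hyA).antisymm (not_lt.1 fun hlt => hx.2 ?_)⟩
  refine mem_interior.2 ⟨ball x (R - dist x y), fun z hz => mem_iInter₂.2 fun y' hy' => ?_,
    isOpen_ball, mem_ball_self (sub_pos.2 hlt)⟩
  rw [mem_ball] at hz
  rw [mem_closedBall]
  linarith [dist_triangle z x y', show dist x y' ≤ dist x y from hmax hy']

theorem exists_ball_cutting_exact_volume_general (n : ℕ) (R : ℝ) (hR : 0 < R)
    (K : Set (EuclideanSpace ℝ (Fin n))) (hK : IsBallConvexBody n R K)
    (δ : ℝ) (x : EuclideanSpace ℝ (Fin n))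
    (hx : x ∈ frontier (ballFloatingBody n R δ K)) :
    ∃ y : EuclideanSpace ℝ (Fin n), ‖x - y‖ = R ∧
      volume (K \ Metric.closedBall y R) = ENNReal.ofReal δ := by
  set A := {y : EuclideanSpace ℝ (Fin n) | volume (K \ closedBall y R) ≤ ENNReal.ofReal δ}
  have hA : IsClosed A :=
    (lowerSemicontinuous_measure_diff_closedBall volume K R).isClosed_preimage _
  obtain ⟨y, hyA, hxy⟩ := exists_mem_dist_eq_of_mem_frontier_biInter_closedBall hA hx
  refine ⟨y, by rwa [← dist_eq_norm], hyA.antisymm (not_lt.1 fun hlt => ?_)⟩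
  rw [← measure_diff_ball_eq_measure_diff_closedBall volume K y hR.ne'] at hlt
  obtain ⟨r, hrR, hr⟩ := exists_lt_measure_diff_closedBall_lt
    hK.1.measurableSet.nullMeasurableSet hK.1.measure_lt_top.ne hlt
  obtain ⟨y', hsub, hxy'⟩ := exists_closedBall_superset_dist_gt hR hxy hrR
  have hy'A : y' ∈ A := (measure_mono (sdiff_subset_sdiff_right hsub)).trans hr.le
  exact (dist_le_of_mem_frontier_biInter_closedBall hx hy'A).not_gt hxy'

/-- Through every boundary point of the `R`-ball floating body `K_δ^R` there is
at least one closed ball of radius `R` cutting off from `K` a set of volume exactly `δ`. -/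
theorem exists_ball_cutting_exact_volume (n : ℕ) (R : ℝ) (hR : 0 < R)
    (K : Set (EuclideanSpace ℝ (Fin n))) (hK : IsBallConvexBody n R K)
    (δ : ℝ) (hδ : 0 < δ) (x : EuclideanSpace ℝ (Fin n))
    (hx : x ∈ frontier (ballFloatingBody n R δ K)) :
    ∃ y : EuclideanSpace ℝ (Fin n), ‖x - y‖ = R ∧
      volume (K \ Metric.closedBall y R) = ENNReal.ofReal δ :=
  exists_ball_cutting_exact_volume_general n R hR K hK δ x hx
end

section
/- Let R > 0 and let K ⊆ ℝ^n be an R-ball convex body with 0 ∈ int(K). Then there exist constants γ > 0 and δ₀ > 0, depending only on n and K, such that for all 0 < δ ≤ δ₀ the following holds: for every x ∈ ∂K, every unit vector ν ∈ ℝ^n with ⟨y − x, ν⟩ ≤ 0 for all y ∈ K (an outer normal of K at x), every ρ > 0 with closedBall(x − ρν, ρ) ⊆ K, and every point x_δ lying both on the segment [0, x] and on the boundary ∂K_δ^R of the R-ball floating body, one has ‖x − x_δ‖ ≤ γ · ρ^{−(n−1)/(n+1)} · δ^{2/(n+1)}. -/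
/-!
Once `δ` is small, every admissible ball `closedBall y R` (one with
`vol (K \ closedBall y R) ≤ δ`) contains a fixed ball around the origin: otherwise a ball of
comparable size inside `K` could be pushed out of it. Since `x_δ` lies on the boundary of the
intersection of the admissible balls, one of them nearly passes through `x_δ`; as it also contains
the ball around the origin, its centre `y` is at distance `≥ R + c t` from `x`, where
`t = ‖x - x_δ‖`. Hence the slab of `K` at `x` of depth `s ≈ t` facing away from `y` misses that
ball and has volume at most `δ`. On the other hand this slab contains, when `s ≤ ρ`, a spheroid
with semi-axes `s` and `√(ρ s)` inside the rolling ball, and otherwise a homothetic copy of the ball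
around the origin of radius `≈ s`; either way its volume is `≳ ρ^{(n-1)/2} s^{(n+1)/2}`, and
comparing this with `δ` gives the bound.
-/

open MeasureTheory
open scoped RealInnerProductSpace

open Metric Module
open scoped Pointwise

theorem exists_lt_dist_of_notMem_interior_biInter_closedBall {X : Type*} [PseudoMetricSpace X]
    {A : Set X} {R ε : ℝ} {z : X} (hz : z ∉ interior (⋂ y ∈ A, closedBall y R))
    (hε : 0 < ε) : ∃ y ∈ A, R - ε < dist z y := by
  by_contra! h
  refine hz (interior_maximal (fun w hw => Set.mem_iInter₂.mpr fun y hy => ?_) isOpen_ball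
    (mem_ball_self hε))
  calc dist w y ≤ dist w z + dist z y := dist_triangle _ _ _
    _ ≤ ε + (R - ε) := add_le_add (mem_ball.mp hw).le (h y hy)
    _ = R := by ring

section NormedSpace

variable {E : Type*} [NormedAddCommGroup E] [NormedSpace ℝ E]

theorem norm_add_le_of_closedBall_subset [Nontrivial E] {y : E} {r R : ℝ} (hr : 0 ≤ r)
    (h : closedBall 0 r ⊆ closedBall y R) : ‖y‖ + r ≤ R := by
  obtain ⟨u, hu, hyu⟩ : ∃ u : E, ‖u‖ = 1 ∧ ‖y‖ • u = y := by
    rcases eq_or_ne y 0 with rfl | hy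
    · obtain ⟨u, hu⟩ := exists_norm_eq E zero_le_one
      exact ⟨u, hu, by simp⟩
    · exact ⟨‖y‖⁻¹ • y, by simp [norm_smul, hy], by simp [smul_smul, hy]⟩
  have hmem := h (show -r • u ∈ closedBall 0 r by simp [norm_smul, hu, abs_of_nonneg hr])
  rw [mem_closedBall, dist_eq_norm, ← hyu, ← sub_smul, norm_smul, hu, mul_one,
    Real.norm_eq_abs, abs_of_nonpos (by linarith [norm_nonneg y])] at hmem
  linarith

theorem closedBall_subset_closedBall_of_measure_diff_lt [MeasurableSpace E] [BorelSpace E]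
    (μ : Measure E) [μ.IsAddHaarMeasure] {K : Set E} {a y : E} {r R : ℝ} (hR : 0 ≤ R)
    (hK : closedBall a (3 * r) ⊆ K) (hμ : μ (K \ closedBall y R) < μ (closedBall a r)) :
    closedBall a r ⊆ closedBall y R := by
  intro p hp
  refine mem_closedBall.mpr ?_
  by_contra! hpy
  have hpa : dist p a ≤ r := hp
  have hr : 0 ≤ r := nonneg_of_mem_closedBall hp
  have hd : 0 < dist p y := hR.trans_lt hpy
  set c := p + (r / dist p y) • (p - y)
  have hcp : dist c p = r := by
    simp [c, norm_smul, abs_of_nonneg hr, ← dist_eq_norm, hd.ne']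
  have hcy : dist c y = dist p y + r := by
    have : c - y = (1 + r / dist p y) • (p - y) := by simp only [c]; module
    rw [dist_eq_norm, this, norm_smul, ← dist_eq_norm, Real.norm_eq_abs,
      abs_of_nonneg (by positivity), add_mul, one_mul, div_mul_cancel₀ _ hd.ne']
  have hsub : closedBall c r ⊆ K \ closedBall y R := fun w hw =>
    ⟨hK (closedBall_subset_closedBall' (by linarith [dist_triangle c p a]) hw),
      Set.disjoint_left.mp (closedBall_disjoint_closedBall (by linarith)) hw⟩
  exact (measure_mono hsub).not_gt (by rwa [Measure.addHaar_closedBall_center μ c,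
    ← Measure.addHaar_closedBall_center μ a])

theorem add_lt_norm_sub_of_lt_norm_smul_sub {x y : E} {σ R r s : ℝ} (hσ : 0 < σ)
    (hσ1 : σ ≤ 1) (hs : 0 ≤ s) (hy : ‖y‖ + r ≤ R) (hsr : 2 * s ≤ (1 - σ) * r)
    (h : R - σ * s < ‖σ • x - y‖) : R + s < ‖x - y‖ := by
  have hconv : ‖σ • x - y‖ ≤ σ * ‖x - y‖ + (1 - σ) * ‖y‖ := by
    have : σ • x - y = σ • (x - y) + (1 - σ) • (-y) := by module
    rw [this]
    refine (norm_add_le _ _).trans_eq ?_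
    rw [norm_smul, norm_smul, norm_neg, Real.norm_eq_abs, Real.norm_eq_abs, abs_of_pos hσ,
      abs_of_nonneg (by linarith)]
  have : σ * (R + s) < σ * ‖x - y‖ := by nlinarith
  exact lt_of_mul_lt_mul_left this hσ.le

theorem closedBall_homothety_subset {K : Set E} (hK : Convex ℝ K) {x : E} (hx : x ∈ K)
    {r θ : ℝ} (hr : 0 ≤ r) (hθ0 : 0 ≤ θ) (hθ1 : θ ≤ 1) (hK0 : closedBall 0 r ⊆ K) :
    closedBall ((1 - θ) • x) (θ * r) ⊆ K :=
  calc closedBall ((1 - θ) • x) (θ * r) = (1 - θ) • {x} + θ • closedBall 0 r := by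
        rw [Set.smul_set_singleton, smul_closedBall _ _ hr, smul_zero, singleton_add_closedBall,
          add_zero, Real.norm_eq_abs, abs_of_nonneg hθ0]
    _ ⊆ (1 - θ) • K + θ • K :=
        Set.add_subset_add (Set.smul_set_mono (Set.singleton_subset_iff.mpr hx))
          (Set.smul_set_mono hK0)
    _ ⊆ K := hK.set_combo_subset (sub_nonneg.mpr hθ1) hθ0 (by ring)

theorem norm_sub_le_norm_of_mem_segment_zero {x y : E} (h : y ∈ segment ℝ 0 x) :
    ‖x - y‖ ≤ ‖x‖ := by
  have := dist_add_dist_of_mem_segment h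
  rw [dist_comm y x, dist_eq_norm x y, dist_zero_left, dist_zero_left] at this
  linarith [norm_nonneg y]

end NormedSpace

section InnerProductSpace

variable {E : Type*} [NormedAddCommGroup E] [InnerProductSpace ℝ E]

theorem setOf_inner_le_subset_compl_closedBall {x y : E} {R s : ℝ} (hR : 0 < R) (hs : 0 < s)
    (hd : R + 2 * s ≤ ‖x - y‖) :
    {w | ⟪x - w, ‖x - y‖⁻¹ • (x - y)⟫ ≤ s} ⊆ (closedBall y R)ᶜ := by
  intro w hw
  have hd0 : 0 < ‖x - y‖ := by linarith
  have hinner : ⟪w - x, x - y⟫ ≥ -(s * ‖x - y‖) := by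
    rw [Set.mem_ofPred_eq, real_inner_smul_right, inv_mul_le_iff₀ hd0] at hw
    rw [← neg_sub x w, inner_neg_left]
    linarith
  have hsq : ‖w - y‖ ^ 2 = ‖w - x‖ ^ 2 + 2 * ⟪w - x, x - y⟫ + ‖x - y‖ ^ 2 := by
    rw [← norm_add_sq_real, sub_add_sub_cancel]
  have : R ^ 2 < ‖w - y‖ ^ 2 := by nlinarith [sq_nonneg ‖w - x‖]
  simpa [dist_eq_norm] using abs_lt_of_sq_lt_sq' this (norm_nonneg _) |>.2

variable [FiniteDimensional ℝ E] [MeasurableSpace E] [BorelSpace E] (μ : Measure E)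
  [μ.IsAddHaarMeasure]

theorem addHaar_image_spheroid (q : E) {e : E} (he : ‖e‖ = 1) {a r : ℝ} (ha : 0 ≤ a)
    (hr : 0 < r) :
    μ ((fun z => q + (r • z + (a - r) • ⟪e, z⟫ • e)) '' closedBall 0 1)
      = ENNReal.ofReal (r ^ (finrank ℝ E - 1) * a) * μ (closedBall 0 1) := by
  set f : E →ₗ[ℝ] E := r • LinearMap.transvection (innerₗ E e) ((a / r - 1) • e)
  have hf : (fun z => q + (r • z + (a - r) • ⟪e, z⟫ • e)) = fun z => q + f z := by
    ext z
    simp only [f, LinearMap.smul_apply, LinearMap.transvection.apply, innerₗ_apply_apply,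
      smul_add, smul_smul]
    congr 3
    field_simp
  have hdim : 0 < finrank ℝ E := by
    have : Nontrivial E := ⟨e, 0, by rintro rfl; simp at he⟩
    exact finrank_pos
  have hdet : LinearMap.det f = r ^ (finrank ℝ E - 1) * a := by
    rw [LinearMap.det_smul, LinearMap.transvection.det, innerₗ_apply_apply, real_inner_smul_right,
      real_inner_self_eq_norm_sq, he]
    obtain ⟨m, hm⟩ : ∃ m, finrank ℝ E = m + 1 := ⟨_, (Nat.succ_pred_eq_of_pos hdim).symm⟩
    rw [hm, Nat.add_sub_cancel, pow_succ]
    field_simp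
    ring
  rw [hf, ← Set.image_image (fun w => q + w) f, Set.image_add_left, measure_preimage_add,
    Measure.addHaar_image_linearMap, hdet, abs_of_nonneg (by positivity)]

theorem ofReal_mul_le_addHaar_closedBall_inter_slab {c x e : E} {ρ s : ℝ}
    (hx : x ∈ closedBall c ρ) (he : ‖e‖ = 1) (hs : 0 < s) (hsρ : s ≤ ρ) :
    ENNReal.ofReal ((√(ρ * s) / 2) ^ (finrank ℝ E - 1) * (s / 8)) * μ (closedBall 0 1)
      ≤ μ (closedBall c ρ ∩ {w | ⟪x - w, e⟫ ≤ s}) := by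
  have hρ : 0 < ρ := hs.trans_le hsρ
  set r := √(ρ * s) / 2
  have hr : 0 < r := by positivity
  have hr2 : r ^ 2 = ρ * s / 4 := by
    rw [div_pow, Real.sq_sqrt (by positivity)]
    norm_num
  have hxc : ⟪x - c, e⟫ ≤ ρ := (real_inner_le_norm _ _).trans (by
    rw [he, mul_one, ← dist_eq_norm]; exact hx)
  -- a spheroid with semi-axes `s / 8` along `e` and `r` across, centred at depth `3 s / 4`
  rw [← addHaar_image_spheroid μ (c + (ρ - 3 / 4 * s) • e) he (by positivity) (by positivity)]
  refine measure_mono ?_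
  rintro _ ⟨z, hz, rfl⟩
  set ζ := ⟪e, z⟫
  set β := ρ - 3 / 4 * s + (s / 8 - r) * ζ
  have hz1 : ‖z‖ ^ 2 ≤ 1 := by
    rw [sq_le_one_iff_abs_le_one, abs_norm]; exact mem_closedBall_zero_iff.mp hz
  have hζ : |ζ| ≤ 1 := (abs_real_inner_le_norm e z).trans (by
    rw [he, one_mul]; exact mem_closedBall_zero_iff.mp hz)
  have hwc : c + (ρ - 3 / 4 * s) • e + (r • z + (s / 8 - r) • ζ • e) - c = β • e + r • z := by
    module
  have hinner : ⟪β • e + r • z, e⟫ = ρ - 3 / 4 * s + s / 8 * ζ := by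
    rw [inner_add_left, real_inner_smul_left, real_inner_smul_left, real_inner_self_eq_norm_sq,
      he, real_inner_comm]
    ring
  have hnorm : ‖β • e + r • z‖ ^ 2 = (β + r * ζ) ^ 2 - r ^ 2 * ζ ^ 2 + r ^ 2 * ‖z‖ ^ 2 := by
    rw [norm_add_sq_real, norm_smul, norm_smul, he, real_inner_smul_left, real_inner_smul_right,
      Real.norm_eq_abs, Real.norm_eq_abs]
    simp only [mul_pow, sq_abs]
    ring
  obtain ⟨hζl, hζu⟩ := abs_le.mp hζ
  refine ⟨?_, ?_⟩
  · rw [mem_closedBall, dist_eq_norm, hwc]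
    have hγ : β + r * ζ = ρ - 3 / 4 * s + s / 8 * ζ := by ring
    refine abs_le_of_sq_le_sq' ?_ hρ.le |>.2
    have h1 : r ^ 2 * ‖z‖ ^ 2 ≤ r ^ 2 := mul_le_of_le_one_right (sq_nonneg r) hz1
    have h2 : (ρ - 3 / 4 * s + s / 8 * ζ) ^ 2 ≤ (ρ - 5 / 8 * s) ^ 2 :=
      pow_le_pow_left₀ (by nlinarith) (by nlinarith) 2
    rw [hnorm, hγ]
    nlinarith [sq_nonneg (r * ζ), mul_le_mul_of_nonneg_left hsρ hs.le]
  · rw [Set.mem_ofPred_eq, ← sub_sub_sub_cancel_right x _ c, inner_sub_left, hwc, hinner]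
    nlinarith

theorem ofReal_mul_le_addHaar_inter_slab_of_convex {K : Set E} (hK : Convex ℝ K) {r₀ D : ℝ}
    (hr₀ : 0 < r₀) (hK0 : closedBall 0 r₀ ⊆ K) (hKD : K ⊆ closedBall 0 D) {x e : E} {s : ℝ}
    (hx : x ∈ K) (he : ‖e‖ = 1) (hs : 0 ≤ s) (hsD : s ≤ r₀ + D) :
    ENNReal.ofReal ((r₀ / (r₀ + D) * s) ^ finrank ℝ E) * μ (closedBall 0 1)
      ≤ μ (K ∩ {w | ⟪x - w, e⟫ ≤ s}) := by
  have hxD : ‖x‖ ≤ D := mem_closedBall_zero_iff.mp (hKD hx)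
  have hD : 0 < r₀ + D := by linarith [norm_nonneg x]
  set θ := s / (r₀ + D)
  have hθ : r₀ / (r₀ + D) * s = θ * r₀ := by ring
  have hθ0 : 0 ≤ θ := div_nonneg hs hD.le
  rw [hθ, ← Measure.addHaar_closedBall' μ ((1 - θ) • x) (mul_nonneg hθ0 hr₀.le)]
  refine measure_mono (Set.subset_inter (closedBall_homothety_subset hK hx hr₀.le hθ0
    (div_le_one_of_le₀ hsD hD.le) hK0) fun w hw => ?_)
  rw [Set.mem_ofPred_eq]
  refine (real_inner_le_norm _ _).trans ?_
  rw [he, mul_one]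
  calc ‖x - w‖ ≤ ‖x - (1 - θ) • x‖ + ‖(1 - θ) • x - w‖ := norm_sub_le_norm_sub_add_norm_sub _ _ _
    _ ≤ θ * D + θ * r₀ := by
        gcongr
        · rw [show x - (1 - θ) • x = θ • x by module, norm_smul, Real.norm_eq_abs,
            abs_of_nonneg (by positivity)]
          gcongr
        · rw [← dist_eq_norm, dist_comm]; exact hw
    _ = s := by rw [← mul_add, add_comm]; exact div_mul_cancel₀ _ hD.ne'

theorem exists_ofReal_le_addHaar_slab {K : Set E} (hK : Convex ℝ K) {r₀ D : ℝ} (hr₀ : 0 < r₀)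
    (hK0 : closedBall 0 r₀ ⊆ K) (hKD : K ⊆ closedBall 0 D) :
    ∃ C > 0, ∀ {c x e : E} {ρ s : ℝ}, ‖e‖ = 1 → x ∈ closedBall c ρ → closedBall c ρ ⊆ K →
      0 < s → s ≤ r₀ + D →
      ENNReal.ofReal (C * √(ρ * s) ^ (finrank ℝ E - 1) * s) ≤ μ (K ∩ {w | ⟪x - w, e⟫ ≤ s}) := by
  set ω := (μ (closedBall 0 1)).toReal
  have hω : 0 < ω := ENNReal.toReal_pos (measure_closedBall_pos μ 0 one_pos).ne'
    measure_closedBall_lt_top.ne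
  have hωμ (v : ℝ) : ENNReal.ofReal (v * ω) = ENNReal.ofReal v * μ (closedBall 0 1) := by
    rw [ENNReal.ofReal_mul' hω.le, ENNReal.ofReal_toReal measure_closedBall_lt_top.ne]
  have hD : 0 < r₀ + D := by
    have := mem_closedBall_zero_iff.mp (hKD (hK0 (mem_closedBall_self hr₀.le)))
    rw [norm_zero] at this
    linarith
  refine ⟨min (1 / (8 * 2 ^ (finrank ℝ E - 1))) ((r₀ / (r₀ + D)) ^ finrank ℝ E) * ω,
    by positivity, fun {c x e ρ s} he hx hcK hs hsD => ?_⟩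
  rw [mul_right_comm _ ω, mul_right_comm _ ω, hωμ]
  rcases le_or_gt s ρ with hsρ | hρs
  · refine le_trans ?_ ((ofReal_mul_le_addHaar_closedBall_inter_slab μ hx he hs hsρ).trans
      (measure_mono (Set.inter_subset_inter_left _ hcK)))
    gcongr ENNReal.ofReal ?_ * _
    calc _ ≤ 1 / (8 * 2 ^ (finrank ℝ E - 1)) * √(ρ * s) ^ (finrank ℝ E - 1) * s := by
          gcongr; exact min_le_left _ _
      _ = _ := by rw [div_pow]; ring
  · refine le_trans ?_ (ofReal_mul_le_addHaar_inter_slab_of_convex μ hK hr₀ hK0 hKD (hcK hx) he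
      hs.le hsD)
    gcongr ENNReal.ofReal ?_ * _
    have hn : finrank ℝ E - 1 + 1 = finrank ℝ E := by
      have : Nontrivial E := ⟨e, 0, by rintro rfl; simp at he⟩
      exact Nat.succ_pred_eq_of_pos finrank_pos
    calc _ ≤ (r₀ / (r₀ + D)) ^ finrank ℝ E * √(s * s) ^ (finrank ℝ E - 1) * s := by
          gcongr; exact min_le_right _ _
      _ = _ := by rw [Real.sqrt_mul_self hs.le, mul_assoc, ← pow_succ, hn, ← mul_pow]

end InnerProductSpace

theorem le_mul_rpow_of_mul_sqrt_pow_le {n : ℕ} (hn : 1 ≤ n) {C ρ t δ : ℝ} (hC : 0 < C)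
    (hρ : 0 < ρ) (ht : 0 ≤ t) (h : C * √(ρ * t) ^ (n - 1) * t ≤ δ) :
    t ≤ C ^ (-2 / ((n : ℝ) + 1)) * ρ ^ (-((n : ℝ) - 1) / ((n : ℝ) + 1))
      * δ ^ (2 / ((n : ℝ) + 1)) := by
  have hδ : 0 ≤ δ := le_trans (by positivity) h
  have hn1 : ((n - 1 : ℕ) : ℝ) = (n : ℝ) - 1 := by rw [Nat.cast_sub hn, Nat.cast_one]
  have hpow (a : ℝ) (ha : 0 ≤ a) (q : ℝ) : (a ^ (q / ((n : ℝ) + 1))) ^ (n + 1) = a ^ q := by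
    rw [← Real.rpow_natCast, ← Real.rpow_mul ha]
    push_cast
    rw [div_mul_cancel₀ _ (by positivity)]
  refine le_of_pow_le_pow_left₀ (Nat.succ_ne_zero n) (by positivity) ?_
  rw [mul_pow, mul_pow, hpow C hC.le, hpow ρ hρ.le, hpow δ hδ, Real.rpow_neg hC.le,
    Real.rpow_neg hρ.le, ← hn1, Real.rpow_natCast, Real.rpow_two, Real.rpow_two, ← mul_inv,
    inv_mul_eq_div, le_div_iff₀ (by positivity)]
  calc t ^ (n + 1) * (C ^ 2 * ρ ^ (n - 1)) = (C * √(ρ * t) ^ (n - 1) * t) ^ 2 := by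
        rw [mul_pow, mul_pow, ← pow_mul, mul_comm (n - 1), pow_mul, Real.sq_sqrt (by positivity),
          mul_pow]
        obtain ⟨m, rfl⟩ : ∃ m, n = m + 1 := ⟨n - 1, by omega⟩
        simp only [Nat.add_sub_cancel]
        ring
    _ ≤ δ ^ 2 := pow_le_pow_left₀ (by positivity) h 2

theorem IsBallConvexBody.convex {n : ℕ} {R : ℝ} {K : Set (EuclideanSpace ℝ (Fin n))}
    (hK : IsBallConvexBody n R K) : Convex ℝ K := by
  rw [hK.2.2]
  exact convex_iInter₂ fun y _ => convex_closedBall y R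

theorem exists_lt_norm_sub_of_mem_frontier_ballFloatingBody {n : ℕ} {R δ r D : ℝ}
    {K : Set (EuclideanSpace ℝ (Fin n))} (hR : 0 ≤ R) (hr : 0 < r) (hD : 0 < D)
    (hK0 : closedBall 0 (3 * r) ⊆ K) (hKD : K ⊆ closedBall 0 D)
    (hδ : ENNReal.ofReal δ < volume (closedBall (0 : EuclideanSpace ℝ (Fin n)) r))
    {x xδ : EuclideanSpace ℝ (Fin n)} (hx : x ∈ K)
    (hxδ : xδ ∈ segment ℝ 0 x ∩ frontier (ballFloatingBody n R δ K)) (hxxδ : xδ ≠ x) :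
    ∃ y, volume (K \ closedBall y R) ≤ ENNReal.ofReal δ ∧
      R + r * ‖x - xδ‖ / (2 * D) < ‖x - y‖ := by
  obtain ⟨σ, ⟨hσ0, hσ1⟩, rfl⟩ : xδ ∈ (fun θ : ℝ => θ • x) '' Set.Icc 0 1 := by
    simpa [segment_eq_image'] using hxδ.1
  have hx0 : x ≠ 0 := by rintro rfl; simp at hxxδ
  have : Nontrivial (EuclideanSpace ℝ (Fin n)) := ⟨⟨x, 0, hx0⟩⟩
  have hadm (y) (hy : volume (K \ closedBall y R) ≤ ENNReal.ofReal δ) :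
      closedBall 0 r ⊆ closedBall y R :=
    closedBall_subset_closedBall_of_measure_diff_lt volume hR hK0 (hy.trans_lt hδ)
  have hint : σ • x ∉ interior (ballFloatingBody n R δ K) := hxδ.2.2
  have hσ : 0 < σ := by
    refine hσ0.lt_of_ne' fun hσ => hint ?_
    rw [hσ, zero_smul]
    refine interior_maximal (ball_subset_closedBall.trans fun z hz => ?_) isOpen_ball
      (mem_ball_self hr)
    exact Set.mem_iInter₂.mpr fun y hy => hadm y hy hz
  have ht : ‖x - σ • x‖ = (1 - σ) * ‖x‖ := by
    rw [show x - σ • x = (1 - σ) • x by module, norm_smul, Real.norm_eq_abs,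
      abs_of_nonneg (sub_nonneg.mpr hσ1)]
  have hs : 0 < r * ‖x - σ • x‖ / (2 * D) := by
    have := norm_pos_iff.mpr (sub_ne_zero.mpr hxxδ.symm)
    positivity
  obtain ⟨y, hy, hyd⟩ := exists_lt_dist_of_notMem_interior_biInter_closedBall hint
    (mul_pos hσ hs)
  refine ⟨y, hy, add_lt_norm_sub_of_lt_norm_smul_sub hσ hσ1 hs.le
    (norm_add_le_of_closedBall_subset hr.le (hadm y hy)) ?_ (by rwa [← dist_eq_norm])⟩
  rw [ht, mul_div_assoc', div_le_iff₀ (by positivity)]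
  have := mul_le_mul_of_nonneg_left (mem_closedBall_zero_iff.mp (hKD hx))
    (mul_nonneg (sub_nonneg.mpr hσ1) hr.le)
  nlinarith

theorem exists_volume_slab_le_of_mem_frontier_ballFloatingBody {n : ℕ} {R δ r D : ℝ}
    {K : Set (EuclideanSpace ℝ (Fin n))} (hR : 0 < R) (hr : 0 < r) (hD : 0 < D)
    (hK0 : closedBall 0 (3 * r) ⊆ K) (hKD : K ⊆ closedBall 0 D)
    (hδ : ENNReal.ofReal δ < volume (closedBall (0 : EuclideanSpace ℝ (Fin n)) r))
    {x xδ : EuclideanSpace ℝ (Fin n)} (hx : x ∈ K)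
    (hxδ : xδ ∈ segment ℝ 0 x ∩ frontier (ballFloatingBody n R δ K)) (hxxδ : xδ ≠ x) :
    ∃ e : EuclideanSpace ℝ (Fin n), ‖e‖ = 1 ∧
      volume (K ∩ {w | ⟪x - w, e⟫ ≤ r * ‖x - xδ‖ / (4 * D)}) ≤ ENNReal.ofReal δ := by
  obtain ⟨y, hy, hyd⟩ :=
    exists_lt_norm_sub_of_mem_frontier_ballFloatingBody hR.le hr hD hK0 hKD hδ hx hxδ hxxδ
  have hxy : x - y ≠ 0 := by
    rw [← norm_pos_iff]
    have : 0 ≤ r * ‖x - xδ‖ / (2 * D) := by positivity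
    linarith
  have h2s : 2 * (r * ‖x - xδ‖ / (4 * D)) = r * ‖x - xδ‖ / (2 * D) := by
    field_simp
    ring
  have hs : 0 < r * ‖x - xδ‖ / (4 * D) := by
    have := norm_pos_iff.mpr (sub_ne_zero.mpr hxxδ.symm)
    positivity
  have hslab : K ∩ {w | ⟪x - w, ‖x - y‖⁻¹ • (x - y)⟫ ≤ r * ‖x - xδ‖ / (4 * D)}
      ⊆ K \ closedBall y R := fun w hw => ⟨hw.1,
    setOf_inner_le_subset_compl_closedBall hR hs (by linarith) hw.2⟩
  exact ⟨_, norm_smul_inv_norm hxy, (measure_mono hslab).trans hy⟩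

/-- For an `R`-ball convex body `K` with `0 ∈ int K` there are constants
`γ, δ₀ > 0` (depending only on `n` and `K`) such that for all `0 < δ ≤ δ₀`, all `x ∈ ∂K` with
rolling radius `ρ > 0` and all `x_δ ∈ [0,x] ∩ ∂K_δ^R` one has
`‖x − x_δ‖ ≤ γ ρ^{-(n-1)/(n+1)} δ^{2/(n+1)}`. -/
theorem floatingBody_distance_bound (n : ℕ) (R : ℝ) (hR : 0 < R)
    (K : Set (EuclideanSpace ℝ (Fin n))) (hK : IsBallConvexBody n R K)
    (h0 : 0 ∈ interior K) :
    ∃ γ > (0 : ℝ), ∃ δ₀ > (0 : ℝ), ∀ δ : ℝ, 0 < δ → δ ≤ δ₀ →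
      ∀ x ∈ frontier K, ∀ ν : EuclideanSpace ℝ (Fin n), ‖ν‖ = 1 →
        (∀ y ∈ K, ⟪y - x, ν⟫ ≤ 0) →
        ∀ ρ : ℝ, 0 < ρ → Metric.closedBall (x - ρ • ν) ρ ⊆ K →
        ∀ xδ ∈ segment ℝ 0 x ∩ frontier (ballFloatingBody n R δ K),
          ‖x - xδ‖ ≤ γ * ρ ^ (-((n : ℝ) - 1) / ((n : ℝ) + 1)) * δ ^ (2 / ((n : ℝ) + 1)) := by
  obtain ⟨ε, hε, hεK⟩ := Metric.mem_nhds_iff.mp (mem_interior_iff_mem_nhds.mp h0)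
  obtain ⟨r, hr, hrK⟩ : ∃ r > 0, closedBall 0 (3 * r) ⊆ K :=
    ⟨ε / 4, by positivity, (closedBall_subset_ball (by linarith)).trans hεK⟩
  obtain ⟨D, hD, hKD⟩ := hK.1.isBounded.subset_closedBall_lt 0 0
  obtain ⟨C, hC, hslab⟩ := exists_ofReal_le_addHaar_slab volume hK.convex (by positivity) hrK hKD
  set V := volume (closedBall (0 : EuclideanSpace ℝ (Fin n)) r)
  have hV : 0 < V.toReal :=
    ENNReal.toReal_pos (measure_closedBall_pos volume 0 hr).ne' measure_closedBall_lt_top.ne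
  refine ⟨4 * D / r * C ^ (-2 / ((n : ℝ) + 1)), by positivity, V.toReal / 2, by positivity,
    fun δ hδ hδδ₀ x hx ν hν _ ρ hρ hρK xδ hxδ => ?_⟩
  rcases eq_or_ne xδ x with rfl | hxxδ
  · simp only [sub_self, norm_zero]; positivity
  have hn : 1 ≤ n := Nat.one_le_iff_ne_zero.mpr fun hn => hx.2 (by
    subst hn; exact Subsingleton.elim (0 : EuclideanSpace ℝ (Fin 0)) x ▸ h0)
  have hxK : x ∈ K := hK.1.isClosed.frontier_subset hx
  have hδV : ENNReal.ofReal δ < V :=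
    (ENNReal.ofReal_lt_iff_lt_toReal hδ.le measure_closedBall_lt_top.ne).mpr (by linarith)
  obtain ⟨e, he, hslabδ⟩ := exists_volume_slab_le_of_mem_frontier_ballFloatingBody hR hr hD hrK
    hKD hδV hxK hxδ hxxδ
  set s := r * ‖x - xδ‖ / (4 * D)
  have hs : 0 < s := by have := norm_pos_iff.mpr (sub_ne_zero.mpr hxxδ.symm); positivity
  have hsD : s ≤ 3 * r + D := by
    have := (norm_sub_le_norm_of_mem_segment_zero hxδ.1).trans
      (mem_closedBall_zero_iff.mp (hKD hxK))
    rw [div_le_iff₀ (by positivity)]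
    nlinarith
  have hxρ : x ∈ closedBall (x - ρ • ν) ρ := by
    rw [mem_closedBall, dist_eq_norm, sub_sub_cancel, norm_smul, hν, mul_one,
      Real.norm_of_nonneg hρ.le]
  have hcap := (hslab he hxρ hρK hs hsD).trans hslabδ
  rw [ENNReal.ofReal_le_ofReal_iff hδ.le, finrank_euclideanSpace_fin] at hcap
  calc ‖x - xδ‖ = 4 * D / r * s := by simp only [s]; field_simp
    _ ≤ _ := by
      rw [mul_assoc _ (C ^ _), mul_assoc _ (C ^ _ * _)]
      gcongr
      exact le_mul_rpow_of_mul_sqrt_pow_le hn hC hρ hs.le hcap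
end

section
/- Let n ≥ 1, s ≥ 1, and let K ⊆ ℝ^n be a measurable set with closedBall(0, 1/s) ⊆ K ⊆ closedBall(0, s). Let z ∈ ℝ^n and R > 0 be such that vol_n(K \ closedBall(z, R)) ≤ (1/2) · vol_n(closedBall(0, 1/(4s))). Then closedBall(0, 1/(2s)) ⊆ closedBall(z, R). -/
open MeasureTheory

set_option maxHeartbeats 1000000 in
open RealInnerProductSpace in
/-- If `closedBall(0,1/s) ⊆ K ⊆ closedBall(0,s)` and a closed ball of radius
`R` cuts off from `K` a set of volume at most `½ vol(closedBall(0,1/(4s)))`, then that ball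
contains `closedBall(0,1/(2s))`. -/
theorem ball_subset_of_small_cutoff (n : ℕ) (hn : 1 ≤ n) (s : ℝ) (hs : 1 ≤ s)
    (K : Set (EuclideanSpace ℝ (Fin n))) (hKmeas : MeasurableSet K)
    (hK1 : Metric.closedBall (0 : EuclideanSpace ℝ (Fin n)) (1 / s) ⊆ K)
    (hK2 : K ⊆ Metric.closedBall (0 : EuclideanSpace ℝ (Fin n)) s)
    (z : EuclideanSpace ℝ (Fin n)) (R : ℝ) (hR : 0 < R)
    (hvol : volume (K \ Metric.closedBall z R) ≤
      volume (Metric.closedBall (0 : EuclideanSpace ℝ (Fin n)) (1 / (4 * s))) / 2) :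
    Metric.closedBall (0 : EuclideanSpace ℝ (Fin n)) (1 / (2 * s)) ⊆
      Metric.closedBall z R := by
  have hs0 : (0:ℝ) < s := lt_of_lt_of_le one_pos hs
  set r : ℝ := 1 / (4 * s) with hrdef
  have hr0 : 0 < r := by positivity
  intro x hx
  by_contra hxz
  rw [Metric.mem_closedBall, not_le] at hxz
  have hxnorm : ‖x‖ ≤ 1 / (2 * s) := by
    simpa [mem_closedBall_zero_iff] using hx
  set u : EuclideanSpace ℝ (Fin n) := z - x with hudef
  have hunorm : ‖u‖ = dist x z := by rw [hudef, dist_eq_norm, norm_sub_rev]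
  have hu0 : 0 < ‖u‖ := by rw [hunorm]; exact lt_trans hR hxz
  set ε : ℝ := (‖u‖ ^ 2 - R ^ 2) / 4 with hεdef
  have hε0 : 0 < ε := by
    have h1 : R < ‖u‖ := by rw [hunorm]; exact hxz
    have : R ^ 2 < ‖u‖ ^ 2 := by nlinarith
    rw [hεdef]; linarith
  have hcont : Continuous fun y : EuclideanSpace ℝ (Fin n) => ⟪y, u⟫ :=
    continuous_id.inner continuous_const
  -- the translated set
  set S₀ : Set (EuclideanSpace ℝ (Fin n)) := {y | ‖y‖ ≤ r ∧ ⟪y, u⟫ ≤ ε} with hS₀def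
  set S : Set (EuclideanSpace ℝ (Fin n)) :=
    {y | ‖y - x‖ ≤ r ∧ ⟪y - x, u⟫ ≤ ε} with hSdef
  have hSsub : S ⊆ K \ Metric.closedBall z R := by
    rintro y ⟨hy1, hy2⟩
    constructor
    · apply hK1
      rw [Metric.mem_closedBall, dist_zero_right]
      calc ‖y‖ = ‖x + (y - x)‖ := by rw [add_sub_cancel]
        _ ≤ ‖x‖ + ‖y - x‖ := norm_add_le _ _
        _ ≤ 1 / (2 * s) + 1 / (4 * s) := add_le_add hxnorm hy1
        _ ≤ 1 / s := by
            rw [div_add_div _ _ (by positivity) (by positivity),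
              div_le_div_iff₀ (by positivity) (by positivity)]
            nlinarith
    · rw [Metric.mem_closedBall, not_le, dist_eq_norm]
      have hexp : ‖y - z‖ ^ 2 = ‖y - x‖ ^ 2 - 2 * ⟪y - x, u⟫ + ‖u‖ ^ 2 := by
        have h := @norm_sub_sq_real (EuclideanSpace ℝ (Fin n)) _ _ (y - x) u
        rw [hudef] at h ⊢
        convert h using 2
        abel
      have h1 : ‖y - z‖ ^ 2 ≥ ‖u‖ ^ 2 - 2 * ε := by nlinarith [sq_nonneg ‖y - x‖]
      have h2 : R ^ 2 < ‖y - z‖ ^ 2 := by rw [hεdef] at h1; nlinarith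
      nlinarith [norm_nonneg (y - z), hR]
  have hS₀meas : MeasurableSet S₀ :=
    ((isClosed_le continuous_norm continuous_const).inter
      (isClosed_le hcont continuous_const)).measurableSet
  have hSeq : S = (fun y : EuclideanSpace ℝ (Fin n) => y - x) ⁻¹' S₀ := rfl
  have hvolS : volume S = volume S₀ := by
    rw [hSeq]
    exact (measurePreserving_sub_right volume x).measure_preimage
      hS₀meas.nullMeasurableSet
  have hupper : volume S₀ ≤ volume (Metric.closedBall (0 : EuclideanSpace ℝ (Fin n)) r) / 2 := by
    rw [← hvolS]
    exact le_trans (measure_mono hSsub) hvol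
  -- lower bound via half ball + slab
  set A : Set (EuclideanSpace ℝ (Fin n)) := {y | ‖y‖ ≤ r ∧ ⟪y, u⟫ ≤ 0} with hAdef
  have hAmeas : MeasurableSet A :=
    ((isClosed_le continuous_norm continuous_const).inter
      (isClosed_le hcont continuous_const)).measurableSet
  have hAsub : A ⊆ S₀ := fun y hy => ⟨hy.1, le_trans hy.2 hε0.le⟩
  have hAneg : (fun y : EuclideanSpace ℝ (Fin n) => -y) ⁻¹' A
      = {y : EuclideanSpace ℝ (Fin n) | ‖y‖ ≤ r ∧ 0 ≤ ⟪y, u⟫} := by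
    ext y
    simp only [Set.mem_preimage, hAdef, Set.mem_setOf_eq, norm_neg, inner_neg_left]
    constructor
    · rintro ⟨h1, h2⟩; exact ⟨h1, by linarith⟩
    · rintro ⟨h1, h2⟩; exact ⟨h1, by linarith⟩
  have hballsub : Metric.closedBall (0 : EuclideanSpace ℝ (Fin n)) r
      ⊆ A ∪ (fun y : EuclideanSpace ℝ (Fin n) => -y) ⁻¹' A := by
    intro y hy
    rw [Metric.mem_closedBall, dist_zero_right] at hy
    rw [hAneg]
    rcases le_or_gt (⟪y, u⟫ : ℝ) 0 with h | h
    · exact Or.inl ⟨hy, h⟩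
    · exact Or.inr ⟨hy, h.le⟩
  have hvolnegA : volume ((fun y : EuclideanSpace ℝ (Fin n) => -y) ⁻¹' A) = volume A :=
    (Measure.measurePreserving_neg volume).measure_preimage hAmeas.nullMeasurableSet
  have hhalf : volume (Metric.closedBall (0 : EuclideanSpace ℝ (Fin n)) r) / 2
      ≤ volume A := by
    apply ENNReal.div_le_of_le_mul'
    calc volume (Metric.closedBall (0 : EuclideanSpace ℝ (Fin n)) r)
        ≤ volume (A ∪ (fun y : EuclideanSpace ℝ (Fin n) => -y) ⁻¹' A) :=
          measure_mono hballsub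
      _ ≤ volume A + volume ((fun y : EuclideanSpace ℝ (Fin n) => -y) ⁻¹' A) :=
          measure_union_le _ _
      _ = 2 * volume A := by rw [hvolnegA, two_mul]
  -- the slab S₀ \ A has positive volume
  set U : Set (EuclideanSpace ℝ (Fin n)) :=
    {y | ‖y‖ < r ∧ 0 < ⟪y, u⟫ ∧ ⟪y, u⟫ < ε} with hUdef
  have hUopen : IsOpen U := by
    apply IsOpen.inter (isOpen_lt continuous_norm continuous_const)
    exact (isOpen_lt continuous_const hcont).inter (isOpen_lt hcont continuous_const)
  have hUsub : U ⊆ S₀ \ A := by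
    rintro y ⟨h1, h2, h3⟩
    exact ⟨⟨h1.le, h3.le⟩, fun h => absurd h.2 (not_le.mpr h2)⟩
  have hUne : U.Nonempty := by
    set t : ℝ := min (ε / (2 * ‖u‖ ^ 2)) (r / (2 * ‖u‖)) with htdef
    have ht0 : 0 < t := lt_min (by positivity) (by positivity)
    refine ⟨t • u, ?_, ?_, ?_⟩
    · show ‖t • u‖ < r
      rw [norm_smul, Real.norm_eq_abs, abs_of_pos ht0]
      calc t * ‖u‖ ≤ (r / (2 * ‖u‖)) * ‖u‖ :=
            mul_le_mul_of_nonneg_right (min_le_right _ _) hu0.le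
        _ = r / 2 := by field_simp
        _ < r := by linarith
    · show 0 < ⟪t • u, u⟫
      rw [real_inner_smul_left, real_inner_self_eq_norm_sq]
      positivity
    · show ⟪t • u, u⟫ < ε
      rw [real_inner_smul_left, real_inner_self_eq_norm_sq]
      calc t * ‖u‖ ^ 2 ≤ (ε / (2 * ‖u‖ ^ 2)) * ‖u‖ ^ 2 :=
            mul_le_mul_of_nonneg_right (min_le_left _ _) (by positivity)
        _ = ε / 2 := by field_simp
        _ < ε := by linarith
  have hCpos : 0 < volume (S₀ \ A) :=
    lt_of_lt_of_le (hUopen.measure_pos volume hUne) (measure_mono hUsub)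
  have hAfin : volume A < ⊤ := by
    refine lt_of_le_of_lt (measure_mono ?_)
      (measure_closedBall_lt_top (x := (0 : EuclideanSpace ℝ (Fin n))) (r := r))
    intro y hy
    rw [Metric.mem_closedBall, dist_zero_right]
    exact hy.1
  have hsplit : volume S₀ = volume A + volume (S₀ \ A) := by
    rw [← measure_inter_add_diff S₀ hAmeas, Set.inter_eq_right.mpr hAsub]
  have hlt : volume A < volume S₀ := by
    rw [hsplit]
    exact ENNReal.lt_add_right hAfin.ne (ne_of_gt hCpos)
  exact absurd (lt_of_le_of_lt hhalf hlt) (not_lt.mpr hupper)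
end
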